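/- SRM success probability for BSC channel coding: applying the square-root (pretty-good) measurement to the CQ embedding of coding with C^⊥ on BSC(p) yields success probability Σ_{v ∈ C^⫫} [Σ_{u ∈ v ⊕ C^⊥} (p^{w_H(u)}(1-p)^{n-w_H(u)})²] / [Σ_{u ∈ v ⊕ C^⊥} p^{w_H(u)}(1-p)^{n-w_H(u)}]. Equivalently, this equals Σ over cosets of (2-norm²)/(1-norm) of the coset probability vectors, which is at most the MAP success probability Σ_{v ∈ C^⫫} max_{u ∈ v ⊕ C^⊥} p^{w_H(u)}(1-p)^{n-w_H(u)}, with equality iff each coset probability vector is supported on a single point or uniform on its support appropriately. -/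

import Mathlib

open Matrix
open scoped Classical

noncomputable section

/-- Hamming weight of a binary vector. -/
def hammingWt {ι : Type*} [Fintype ι] (v : ι → ZMod 2) : ℕ :=
  (Finset.univ.filter fun i => v i ≠ 0).card

/-- i.i.d. Bernoulli(p) probability of an error vector. -/
def bernP (p : ℝ) (n : ℕ) {ι : Type*} [Fintype ι] (v : ι → ZMod 2) : ℝ :=
  p ^ hammingWt v * (1 - p) ^ (n - hammingWt v)

/-- α'(v) = ∑_{c ∈ C^⊥} p_{c ⊕ v}. -/
def alphaP {n m : ℕ} (p : ℝ) (Gperp : Matrix (Fin m) (Fin n) (ZMod 2))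
    (v : Fin n → ZMod 2) : ℝ :=
  ∑ z : Fin m → ZMod 2, bernP p n (v + Matrix.vecMul z Gperp)

/-- The square-root-measurement POVM element Π_z = ∑_v (p_{c_z⊕v}/α'(v))|v⟩⟨v|
for the CQ embedding of coding with C^⊥ on BSC(p). -/
def srmMeas {n m : ℕ} (p : ℝ) (Gperp : Matrix (Fin m) (Fin n) (ZMod 2))
    (z : Fin m → ZMod 2) : Matrix (Fin n → ZMod 2) (Fin n → ZMod 2) ℂ :=
  Matrix.diagonal fun v =>
    ((bernP p n (v + Matrix.vecMul z Gperp) / alphaP p Gperp v : ℝ) : ℂ)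

/-! Both the channel output state φ_z and the SRM element Π_z are diagonal, so the success
probability is `2^{-m} ∑_v ∑_z p_{v+c_z}² / α'(v)`. This summand depends on `v` only through the
coset `v + C^⊥`, and `x = c_z + d_w` identifies `C^⊥ × C^⫫` with all of `𝔽₂ⁿ`, so the sum over `v`
is `2^m` times the sum over the coset representatives `d_w`, cancelling the uniform prior. Against MAP,
each coset contributes `(∑ q²)/(∑ q) ≤ max q`. -/

lemma bernP_nonneg {ι : Type*} [Fintype ι] {p : ℝ} (hp0 : 0 ≤ p) (hp1 : p ≤ 1) (n : ℕ)
    (v : ι → ZMod 2) : 0 ≤ bernP p n v :=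
  mul_nonneg (pow_nonneg hp0 _) (pow_nonneg (sub_nonneg.2 hp1) _)

lemma Finset.sum_sq_div_sum_le_sup' {ι : Type*} {s : Finset ι} (hs : s.Nonempty) {q : ι → ℝ}
    (hq : ∀ i ∈ s, 0 ≤ q i) : (∑ i ∈ s, q i ^ 2) / ∑ i ∈ s, q i ≤ s.sup' hs q := by
  have hsup : ∀ i ∈ s, q i ≤ s.sup' hs q := fun i hi => s.le_sup' q hi
  rcases (Finset.sum_nonneg hq).eq_or_lt with hzero | hpos
  · obtain ⟨i, hi⟩ := hs
    rw [← hzero, div_zero]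
    exact (hq i hi).trans (hsup i hi)
  · rw [div_le_iff₀ hpos, Finset.mul_sum]
    exact Finset.sum_le_sum fun i hi => by
      rw [sq]; exact mul_le_mul_of_nonneg_right (hsup i hi) (hq i hi)

lemma Matrix.re_trace_diagonal_ofReal_mul_diagonal_ofReal {ι : Type*} [Fintype ι] [DecidableEq ι]
    (a b : ι → ℝ) :
    (trace (diagonal (fun i => (a i : ℂ)) * diagonal (fun i => (b i : ℂ)))).re = ∑ i, a i * b i := by
  simp [diagonal_mul_diagonal, trace_diagonal, Complex.re_sum]

lemma AddMonoidHom.sum_comp_map_add_add_map {A V M : Type*} [AddGroup A] [Fintype A] [AddCommMonoid V]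
    [AddCommMonoid M] (φ : A →+ V) (f : V → M) (a : A) (v : V) :
    ∑ z, f (φ a + v + φ z) = ∑ z, f (v + φ z) := by
  refine Fintype.sum_equiv (Equiv.addLeft a) _ _ fun z => ?_
  simp only [Equiv.coe_addLeft, map_add]
  congr 1
  abel

lemma sum_eq_card_smul_sum_of_bijective_add {A B V M : Type*} [Fintype A] [Fintype B] [Fintype V]
    [Add V] [AddCommMonoid M] {φ : A → V} {ψ : B → V}
    (hbij : Function.Bijective fun x : A × B => φ x.1 + ψ x.2) {h : V → M}
    (hh : ∀ a b, h (φ a + ψ b) = h (ψ b)) :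
    ∑ v, h v = Fintype.card A • ∑ b, h (ψ b) := by
  rw [← Fintype.sum_bijective _ hbij (fun x => h (φ x.1 + ψ x.2)) h fun _ => rfl,
    Fintype.sum_prod_type]
  simp only [hh, Finset.sum_const, Finset.card_univ]

lemma srm_success_eq_sum_sq_div_alphaP {n m : ℕ} (p : ℝ) (Gperp : Matrix (Fin m) (Fin n) (ZMod 2)) :
    ∑ z : Fin m → ZMod 2, ((2 : ℝ) ^ m)⁻¹ *
        (trace (diagonal (fun v => (bernP p n (v + vecMul z Gperp) : ℂ)) * srmMeas p Gperp z)).re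
      = ((2 : ℝ) ^ m)⁻¹ * ∑ v : Fin n → ZMod 2,
          (∑ z : Fin m → ZMod 2, bernP p n (v + vecMul z Gperp) ^ 2) / alphaP p Gperp v := by
  simp only [srmMeas, re_trace_diagonal_ofReal_mul_diagonal_ofReal, ← Finset.mul_sum,
    Finset.sum_div]
  rw [Finset.sum_comm]
  simp only [sq, mul_div_assoc]

/-- The SRM success probability for coding with C^⊥ on BSC(p)
equals ∑ over cosets of (2-norm²)/(1-norm) of the coset probability vectors, and
is at most the MAP success probability ∑ over cosets of the max coset
probability. -/
theorem srm_bsc_success_probability (n k m : ℕ) (p : ℝ)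
    (hp0 : 0 < p) (hp1 : p < 1)
    (Gperp : Matrix (Fin m) (Fin n) (ZMod 2))
    (Gdd : Matrix (Fin k) (Fin n) (ZMod 2))
    (hpart : ∀ x : Fin n → ZMod 2,
      ∃! zw : (Fin m → ZMod 2) × (Fin k → ZMod 2),
        x = Matrix.vecMul zw.1 Gperp + Matrix.vecMul zw.2 Gdd) :
    (∑ z : Fin m → ZMod 2, ((2 : ℝ) ^ m)⁻¹ *
        (Matrix.trace
          (Matrix.diagonal (fun v => (bernP p n (v + Matrix.vecMul z Gperp) : ℂ))
            * srmMeas p Gperp z)).re)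
      = ∑ w : Fin k → ZMod 2,
          (∑ u : Fin m → ZMod 2,
              (bernP p n (Matrix.vecMul w Gdd + Matrix.vecMul u Gperp)) ^ 2) /
            (∑ u : Fin m → ZMod 2,
              bernP p n (Matrix.vecMul w Gdd + Matrix.vecMul u Gperp)) ∧
    (∑ z : Fin m → ZMod 2, ((2 : ℝ) ^ m)⁻¹ *
        (Matrix.trace
          (Matrix.diagonal (fun v => (bernP p n (v + Matrix.vecMul z Gperp) : ℂ))
            * srmMeas p Gperp z)).re)
      ≤ ∑ w : Fin k → ZMod 2,
          Finset.univ.sup' Finset.univ_nonempty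
            (fun u : Fin m → ZMod 2 =>
              bernP p n (Matrix.vecMul w Gdd + Matrix.vecMul u Gperp)) := by
  have hbij : Function.Bijective fun zw : (Fin m → ZMod 2) × (Fin k → ZMod 2) =>
      vecMul zw.1 Gperp + vecMul zw.2 Gdd :=
    (Function.bijective_iff_existsUnique _).2 fun x => by simpa only [eq_comm] using hpart x
  have hshift : ∀ (f : (Fin n → ZMod 2) → ℝ) u v,
      ∑ z, f (vecMul u Gperp + v + vecMul z Gperp) = ∑ z, f (v + vecMul z Gperp) :=
    AddMonoidHom.sum_comp_map_add_add_map (vecMulLinear Gperp).toAddMonoidHom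
  have hsrm := srm_success_eq_sum_sq_div_alphaP p Gperp
  rw [sum_eq_card_smul_sum_of_bijective_add (φ := fun u => vecMul u Gperp)
    (ψ := fun w => vecMul w Gdd) hbij fun u w => by
      simp only [alphaP, hshift (bernP p n), hshift fun x => bernP p n x ^ 2]] at hsrm
  rw [Fintype.card_fun, ZMod.card, Fintype.card_fin, nsmul_eq_mul, Nat.cast_pow,
    Nat.cast_ofNat, inv_mul_cancel_left₀ (by positivity)] at hsrm
  simp only [alphaP] at hsrm
  refine ⟨hsrm, hsrm ▸ Finset.sum_le_sum fun w _ => ?_⟩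
  exact Finset.sum_sq_div_sum_le_sup' _ fun u _ => bernP_nonneg hp0.le hp1.le n _

end
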